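/- Wire homeomorphism is a confluent and terminating rewrite relation on labelled interfaced DAGs when oriented as removal of interior wire nodes: every LIDAG reduces to a unique normal form with no removable wire nodes, hence two LIDAGs are wire-homeomorphic iff their normal forms are isomorphic. -/

import Mathlib

/-!
Erasing a wire `w` with in-neighbour `u` and out-neighbour `v` amounts to replacing every
path `a → w → b` by an edge `a → b`; in this form (`FDia.erase`) the operation no longer
mentions `u` and `v`. Every step deletes a vertex, so rewriting terminates. A second wire
survives the erasure of the first, and erasing two distinct wires in either order gives
isomorphic graphs, so rewriting is locally confluent up to isomorphism. Steps can be
transported along isomorphisms, so Newman's lemma modulo isomorphism yields confluence,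
unique normal forms, and the description of the generated equivalence by normal forms.
-/

/-- A finite labelled interfaced DAG (the acyclicity plays no role in the rewriting
statement): a finite directed graph with partial labelling and interface lists. -/
structure FDia (L : Type) (m n : ℕ) : Type 1 where
  V : Type
  [fin : Fintype V]
  [deq : DecidableEq V]
  E : V → V → Prop
  label : V → Option L
  ins : Fin m → V
  outs : Fin n → V

attribute [instance] FDia.fin FDia.deq

/-- Isomorphism of labelled interfaced graphs. -/
def Iso {L : Type} {m n : ℕ} (D₁ D₂ : FDia L m n) : Prop :=
  ∃ e : D₁.V ≃ D₂.V,
    (∀ u v, D₁.E u v ↔ D₂.E (e u) (e v)) ∧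
    (∀ v, D₂.label (e v) = D₁.label v) ∧
    (∀ i, e (D₁.ins i) = D₂.ins i) ∧
    (∀ j, e (D₁.outs j) = D₂.outs j)

/-- Removal of an interior wire node `w` with in-edge from `u` and out-edge to `v`,
replacing the two edges by the single edge `(u, v)`. -/
def removeWire {L : Type} {m n : ℕ} (D : FDia L m n) (w u v : D.V)
    (hin : ∀ i, D.ins i ≠ w) (hout : ∀ j, D.outs j ≠ w) : FDia L m n where
  V := {z : D.V // z ≠ w}
  E a b := D.E a.1 b.1 ∨ (a.1 = u ∧ b.1 = v)
  label a := D.label a.1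
  ins i := ⟨D.ins i, hin i⟩
  outs j := ⟨D.outs j, hout j⟩

/-- One step of the removal-oriented wire homeomorphism rewrite: remove an unlabelled
non-interface node `w` with exactly one incoming edge `(u, w)` and one outgoing edge
`(w, v)`. -/
def Step {L : Type} {m n : ℕ} (D₁ D₂ : FDia L m n) : Prop :=
  ∃ (w u v : D₁.V), D₁.label w = none ∧ D₁.E u w ∧ D₁.E w v ∧
    (∀ z, D₁.E z w → z = u) ∧ (∀ z, D₁.E w z → z = v) ∧
    ∃ (hin : ∀ i, D₁.ins i ≠ w) (hout : ∀ j, D₁.outs j ≠ w),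
      Iso D₂ (removeWire D₁ w u v hin hout)

/-- A diagram is in normal form when no wire node can be removed. -/
def NormalForm {L : Type} {m n : ℕ} (D : FDia L m n) : Prop := ¬ ∃ D', Step D D'

namespace Relation

variable {α : Type*} {r eqv : α → α → Prop}

def IsNormalForm (r : α → α → Prop) (a : α) : Prop := ¬ ∃ b, r a b

def JoinModulo (eqv r : α → α → Prop) (a b : α) : Prop :=
  ∃ a' b', ReflTransGen r a a' ∧ ReflTransGen r b b' ∧ eqv a' b'

def Compatible (r eqv : α → α → Prop) : Prop :=
  ∀ ⦃a b c⦄, eqv a b → r b c → ∃ c', r a c' ∧ eqv c' c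

theorem Compatible.reflTransGen (h : Compatible r eqv) {a b c : α} (hab : eqv a b)
    (hbc : ReflTransGen r b c) : ∃ c', ReflTransGen r a c' ∧ eqv c' c := by
  induction hbc with
  | refl => exact ⟨a, .refl, hab⟩
  | tail _ hcd ih =>
    obtain ⟨c', hac', hc'c⟩ := ih
    obtain ⟨d', hc'd', hd'd⟩ := h hc'c hcd
    exact ⟨d', hac'.tail hc'd', hd'd⟩

theorem Compatible.isNormalForm (h : Compatible r eqv) {a b : α} (hab : eqv a b)
    (ha : IsNormalForm r a) : IsNormalForm r b := fun ⟨_, hbc⟩ =>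
  ha ((h hab hbc).imp fun _ => And.left)

theorem exists_reflTransGen_isNormalForm (hwf : WellFounded (flip r)) (a : α) :
    ∃ b, ReflTransGen r a b ∧ IsNormalForm r b := by
  obtain ⟨b, hab, hmin⟩ := hwf.has_min {b | ReflTransGen r a b} ⟨a, .refl⟩
  exact ⟨b, hab, fun ⟨c, hbc⟩ => hmin c (hab.tail hbc) hbc⟩

theorem ReflTransGen.eq_of_isNormalForm {a b : α} (hab : ReflTransGen r a b)
    (ha : IsNormalForm r a) : a = b :=
  hab.cases_head.resolve_right fun ⟨c, hac, _⟩ => ha ⟨c, hac⟩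

theorem joinModulo_of_locallyConfluent (heqv : Equivalence eqv) (hcompat : Compatible r eqv)
    (hwf : WellFounded (flip r)) (hloc : ∀ a b c, r a b → r a c → JoinModulo eqv r b c)
    {a b c : α} (hab : ReflTransGen r a b) (hac : ReflTransGen r a c) :
    JoinModulo eqv r b c := by
  induction a using hwf.induction generalizing b c with
  | _ a ih =>
    rcases hab.cases_head with rfl | ⟨x, hax, hxb⟩
    · exact ⟨c, c, hac, .refl, heqv.refl c⟩
    rcases hac.cases_head with rfl | ⟨y, hay, hyc⟩
    · exact ⟨b, b, .refl, hab, heqv.refl b⟩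
    obtain ⟨x', y', hxx', hyy', hx'y'⟩ := hloc a x y hax hay
    obtain ⟨b₁, p, hbb₁, hx'p, hb₁p⟩ := ih x hax hxb hxx'
    obtain ⟨p', hy'p', hp'p⟩ := hcompat.reflTransGen (heqv.symm hx'y') hx'p
    obtain ⟨c₁, q, hcc₁, hp'q, hc₁q⟩ := ih y hay hyc (hyy'.trans hy'p')
    obtain ⟨q', hb₁q', hq'q⟩ := hcompat.reflTransGen (heqv.trans hb₁p (heqv.symm hp'p)) hp'q
    exact ⟨q', c₁, hbb₁.trans hb₁q', hcc₁, heqv.trans hq'q (heqv.symm hc₁q)⟩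

theorem eqv_of_isNormalForm
    (hconf : ∀ {a b c}, ReflTransGen r a b → ReflTransGen r a c → JoinModulo eqv r b c)
    {a b c : α} (hab : ReflTransGen r a b) (hb : IsNormalForm r b)
    (hac : ReflTransGen r a c) (hc : IsNormalForm r c) : eqv b c := by
  obtain ⟨b', c', hbb', hcc', hb'c'⟩ := hconf hab hac
  rwa [← hbb'.eq_of_isNormalForm hb, ← hcc'.eq_of_isNormalForm hc] at hb'c'

theorem eqvGen_iff_eqv_normalForms (heqv : Equivalence eqv) (hcompat : Compatible r eqv)
    (hwf : WellFounded (flip r))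
    (hconf : ∀ {a b c}, ReflTransGen r a b → ReflTransGen r a c → JoinModulo eqv r b c)
    {a b : α} :
    EqvGen (fun x y => eqv x y ∨ r x y) a b ↔
      ∃ na nb, ReflTransGen r a na ∧ IsNormalForm r na ∧ ReflTransGen r b nb ∧
        IsNormalForm r nb ∧ eqv na nb := by
  refine ⟨fun h => ?_, fun ⟨na, nb, hana, _, hbnb, _, hnanb⟩ => ?_⟩
  · induction h with
    | rel x y hxy =>
      obtain ⟨ny, hyny, hny⟩ := exists_reflTransGen_isNormalForm hwf y
      rcases hxy with hxy | hxy
      · obtain ⟨nx, hxnx, hnxny⟩ := hcompat.reflTransGen hxy hyny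
        exact ⟨nx, ny, hxnx, hcompat.isNormalForm (heqv.symm hnxny) hny, hyny, hny, hnxny⟩
      · exact ⟨ny, ny, .head hxy hyny, hny, hyny, hny, heqv.refl ny⟩
    | refl x =>
      obtain ⟨nx, hxnx, hnx⟩ := exists_reflTransGen_isNormalForm hwf x
      exact ⟨nx, nx, hxnx, hnx, hxnx, hnx, heqv.refl nx⟩
    | symm x y _ ih =>
      obtain ⟨nx, ny, hxnx, hnx, hyny, hny, hnxny⟩ := ih
      exact ⟨ny, nx, hyny, hny, hxnx, hnx, heqv.symm hnxny⟩
    | trans x y z _ _ ihxy ihyz =>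
      obtain ⟨nx, ny, hxnx, hnx, hyny, hny, hnxny⟩ := ihxy
      obtain ⟨ny', nz, hyny', hny', hznz, hnz, hny'nz⟩ := ihyz
      exact ⟨nx, nz, hxnx, hnx, hznz, hnz, heqv.trans hnxny
        (heqv.trans (eqv_of_isNormalForm hconf hyny hny hyny' hny') hny'nz)⟩
  · have toEqvGen {x y : α} (h : ReflTransGen r x y) :
        EqvGen (fun x y => eqv x y ∨ r x y) x y :=
      EqvGen.mono (fun _ _ => Or.inr) _ _ (EqvGen.reflTransGen_le_eqvGen r _ _ h)
    exact .trans _ _ _ (toEqvGen hana)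
      (.trans _ _ _ (.rel _ _ (.inl hnanb)) (.symm _ _ (toEqvGen hbnb)))

end Relation

namespace Iso

variable {L : Type} {m n : ℕ}

protected theorem refl (D : FDia L m n) : Iso D D :=
  ⟨Equiv.refl _, fun _ _ => Iff.rfl, fun _ => rfl, fun _ => rfl, fun _ => rfl⟩

protected theorem symm {A B : FDia L m n} : Iso A B → Iso B A := by
  rintro ⟨e, hE, hl, hi, ho⟩
  refine ⟨e.symm, fun u v => ?_, fun v => ?_, fun i => ?_, fun j => ?_⟩
  · rw [hE, e.apply_symm_apply, e.apply_symm_apply]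
  · rw [← hl, e.apply_symm_apply]
  · rw [← hi, e.symm_apply_apply]
  · rw [← ho, e.symm_apply_apply]

protected theorem trans {A B C : FDia L m n} : Iso A B → Iso B C → Iso A C := by
  rintro ⟨e, hE, hl, hi, ho⟩ ⟨f, fE, fl, fi, fo⟩
  refine ⟨e.trans f, fun u v => (hE u v).trans (fE _ _), fun v => (fl _).trans (hl v),
    fun i => ?_, fun j => ?_⟩
  · simp [hi, fi]
  · simp [ho, fo]

theorem equivalence : Equivalence (@Iso L m n) :=
  ⟨Iso.refl, Iso.symm, Iso.trans⟩

theorem card_eq {A B : FDia L m n} : Iso A B → Fintype.card A.V = Fintype.card B.V :=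
  fun ⟨e, _⟩ => Fintype.card_congr e

end Iso

namespace FDia

variable {L : Type} {m n : ℕ}

structure IsWire (D : FDia L m n) (w : D.V) : Prop where
  label_eq_none : D.label w = none
  ins_ne : ∀ i, D.ins i ≠ w
  outs_ne : ∀ j, D.outs j ≠ w
  existsUnique_pred : ∃! u, D.E u w
  existsUnique_succ : ∃! v, D.E w v

def erase (D : FDia L m n) (w : D.V) (hw : D.IsWire w) : FDia L m n where
  V := {z : D.V // z ≠ w}
  E a b := D.E a b ∨ (D.E a w ∧ D.E w b)
  label a := D.label a
  ins i := ⟨D.ins i, hw.ins_ne i⟩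
  outs j := ⟨D.outs j, hw.outs_ne j⟩

theorem iso_removeWire_erase {D : FDia L m n} {w u v : D.V} (hw : D.IsWire w)
    (hu : D.E u w) (hv : D.E w v) :
    Iso (removeWire D w u v hw.ins_ne hw.outs_ne) (D.erase w hw) := by
  refine ⟨Equiv.refl _, fun a b => or_congr_right ⟨?_, ?_⟩, fun _ => rfl, fun _ => rfl,
    fun _ => rfl⟩
  · rintro ⟨ha, hb⟩
    exact ⟨ha ▸ hu, hb ▸ hv⟩
  · rintro ⟨ha, hb⟩
    exact ⟨hw.existsUnique_pred.unique ha hu, hw.existsUnique_succ.unique hb hv⟩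

theorem step_iff {A B : FDia L m n} :
    Step A B ↔ ∃ w, ∃ hw : A.IsWire w, Iso B (A.erase w hw) := by
  constructor
  · rintro ⟨w, u, v, hl, hu, hv, hu', hv', hin, hout, hB⟩
    have hw : A.IsWire w := ⟨hl, hin, hout, ⟨u, hu, hu'⟩, ⟨v, hv, hv'⟩⟩
    exact ⟨w, hw, hB.trans (iso_removeWire_erase hw hu hv)⟩
  · rintro ⟨w, hw, hB⟩
    obtain ⟨u, hu, hu'⟩ := hw.existsUnique_pred
    obtain ⟨v, hv, hv'⟩ := hw.existsUnique_succ
    exact ⟨w, u, v, hw.label_eq_none, hu, hv, hu', hv', hw.ins_ne, hw.outs_ne,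
      hB.trans (iso_removeWire_erase hw hu hv).symm⟩

theorem card_lt_of_step {A B : FDia L m n} (h : Step A B) :
    Fintype.card B.V < Fintype.card A.V := by
  obtain ⟨w, hw, hB⟩ := step_iff.1 h
  rw [hB.card_eq]
  exact Fintype.card_subtype_lt (x := w) (by simp)

theorem wellFounded_flip_step : WellFounded (flip (@Step L m n)) :=
  Subrelation.wf card_lt_of_step
    (InvImage.wf (fun D : FDia L m n => Fintype.card D.V) wellFounded_lt)

theorem _root_.Iso.exists_erase {A B : FDia L m n} (h : Iso A B) {w : A.V} (hw : A.IsWire w) :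
    ∃ w', ∃ hw' : B.IsWire w', Iso (A.erase w hw) (B.erase w' hw') := by
  obtain ⟨e, hE, hl, hi, ho⟩ := h
  have hw' : B.IsWire (e w) :=
    ⟨(hl w).trans hw.label_eq_none,
     fun i hi' => hw.ins_ne i (e.injective ((hi i).trans hi')),
     fun j hj' => hw.outs_ne j (e.injective ((ho j).trans hj')),
     (e.existsUnique_congr fun u => hE u w).1 hw.existsUnique_pred,
     (e.existsUnique_congr fun v => hE w v).1 hw.existsUnique_succ⟩
  exact ⟨e w, hw', e.subtypeEquiv fun z => e.injective.ne_iff.symm,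
    fun a b => or_congr (hE a.1 b.1) (and_congr (hE a.1 w) (hE w b.1)), fun a => hl a.1,
    fun i => Subtype.ext (hi i), fun j => Subtype.ext (ho j)⟩

theorem step_erase {D : FDia L m n} {w : D.V} (hw : D.IsWire w) : Step D (D.erase w hw) :=
  step_iff.2 ⟨w, hw, .refl _⟩

theorem compatible_step_iso : Relation.Compatible (@Step L m n) Iso := by
  intro A B C hAB hBC
  obtain ⟨w, hw, hC⟩ := step_iff.1 hBC
  obtain ⟨w', hw', hBA⟩ := hAB.symm.exists_erase hw
  exact ⟨A.erase w' hw', step_erase hw', hBA.symm.trans hC.symm⟩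

theorem existsUnique_pred_erase {D : FDia L m n} {w₁ w₂ : D.V} (hw₁ : D.IsWire w₁)
    (hne : w₂ ≠ w₁) (h₂ : ∃! u, D.E u w₂) : ∃! a, (D.erase w₁ hw₁).E a ⟨w₂, hne⟩ := by
  obtain ⟨u₁, hu₁, hu₁'⟩ := hw₁.existsUnique_pred
  obtain ⟨u₂, hu₂, hu₂'⟩ := h₂
  by_cases hu₂w₁ : u₂ = w₁
  · subst hu₂w₁
    have hu₁u₂ : u₁ ≠ u₂ := by
      rintro rfl
      exact hne (hw₁.existsUnique_succ.unique hu₂ hu₁)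
    refine ⟨⟨u₁, hu₁u₂⟩, Or.inr ⟨hu₁, hu₂⟩, ?_⟩
    rintro ⟨a, ha⟩ (h | ⟨h, -⟩)
    · exact absurd (hu₂' a h) ha
    · exact Subtype.ext (hu₁' a h)
  · refine ⟨⟨u₂, hu₂w₁⟩, Or.inl hu₂, ?_⟩
    rintro ⟨a, ha⟩ (h | ⟨-, h⟩)
    · exact Subtype.ext (hu₂' a h)
    · exact absurd (hu₂' w₁ h).symm hu₂w₁

theorem existsUnique_succ_erase {D : FDia L m n} {w₁ w₂ : D.V} (hw₁ : D.IsWire w₁)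
    (hne : w₂ ≠ w₁) (h₂ : ∃! v, D.E w₂ v) : ∃! b, (D.erase w₁ hw₁).E ⟨w₂, hne⟩ b := by
  obtain ⟨v₁, hv₁, hv₁'⟩ := hw₁.existsUnique_succ
  obtain ⟨v₂, hv₂, hv₂'⟩ := h₂
  by_cases hv₂w₁ : v₂ = w₁
  · subst hv₂w₁
    have hv₁v₂ : v₁ ≠ v₂ := by
      rintro rfl
      exact hne (hw₁.existsUnique_pred.unique hv₂ hv₁)
    refine ⟨⟨v₁, hv₁v₂⟩, Or.inr ⟨hv₂, hv₁⟩, ?_⟩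
    rintro ⟨b, hb⟩ (h | ⟨-, h⟩)
    · exact absurd (hv₂' b h) hb
    · exact Subtype.ext (hv₁' b h)
  · refine ⟨⟨v₂, hv₂w₁⟩, Or.inl hv₂, ?_⟩
    rintro ⟨b, hb⟩ (h | ⟨h, -⟩)
    · exact Subtype.ext (hv₂' b h)
    · exact absurd (hv₂' w₁ h).symm hv₂w₁

theorem IsWire.erase {D : FDia L m n} {w₁ w₂ : D.V} (hw₂ : D.IsWire w₂) (hw₁ : D.IsWire w₁)
    (hne : w₂ ≠ w₁) : (D.erase w₁ hw₁).IsWire ⟨w₂, hne⟩ :=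
  ⟨hw₂.label_eq_none, fun i h => hw₂.ins_ne i (congrArg Subtype.val h),
    fun j h => hw₂.outs_ne j (congrArg Subtype.val h),
    existsUnique_pred_erase hw₁ hne hw₂.existsUnique_pred,
    existsUnique_succ_erase hw₁ hne hw₂.existsUnique_succ⟩

theorem erase_erase_iso {D : FDia L m n} {w₁ w₂ : D.V} (hw₁ : D.IsWire w₁)
    (hw₂ : D.IsWire w₂) (hne : w₂ ≠ w₁) :
    Iso ((D.erase w₁ hw₁).erase ⟨w₂, hne⟩ (hw₂.erase hw₁ hne))
      ((D.erase w₂ hw₂).erase ⟨w₁, hne.symm⟩ (hw₁.erase hw₂ hne.symm)) := by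
  let e : ((D.erase w₁ hw₁).erase ⟨w₂, hne⟩ (hw₂.erase hw₁ hne)).V ≃
      ((D.erase w₂ hw₂).erase ⟨w₁, hne.symm⟩ (hw₁.erase hw₂ hne.symm)).V :=
    { toFun z := ⟨⟨z.1.1, fun h => z.2 (Subtype.ext h)⟩, fun h => z.1.2 (congrArg Subtype.val h)⟩
      invFun z := ⟨⟨z.1.1, fun h => z.2 (Subtype.ext h)⟩, fun h => z.1.2 (congrArg Subtype.val h)⟩
      left_inv _ := rfl
      right_inv _ := rfl }
  refine ⟨e, fun ⟨⟨a, ha₁⟩, ha₂⟩ ⟨⟨b, hb₁⟩, hb₂⟩ => ?_, fun _ => rfl, fun _ => rfl, fun _ => rfl⟩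
  -- The paths `a → w₁ → w₂ → w₁ → b` and `a → w₂ → w₁ → w₂ → b` appear on one side only;
  -- they cannot exist, as they would give a wire two predecessors.
  have h₁ : ¬ (D.E a w₁ ∧ D.E w₂ w₁) := fun ⟨h, h'⟩ =>
    ha₂ (Subtype.ext (hw₁.existsUnique_pred.unique h h'))
  have h₂ : ¬ (D.E a w₂ ∧ D.E w₁ w₂) := fun ⟨h, h'⟩ => ha₁ (hw₂.existsUnique_pred.unique h h')
  change (D.E a b ∨ (D.E a w₁ ∧ D.E w₁ b)) ∨
      ((D.E a w₂ ∨ (D.E a w₁ ∧ D.E w₁ w₂)) ∧ (D.E w₂ b ∨ (D.E w₂ w₁ ∧ D.E w₁ b))) ↔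
    (D.E a b ∨ (D.E a w₂ ∧ D.E w₂ b)) ∨
      ((D.E a w₁ ∨ (D.E a w₂ ∧ D.E w₂ w₁)) ∧ (D.E w₁ b ∨ (D.E w₁ w₂ ∧ D.E w₂ b)))
  tauto

theorem step_joinModulo {D D₁ D₂ : FDia L m n} (h₁ : Step D D₁) (h₂ : Step D D₂) :
    Relation.JoinModulo Iso Step D₁ D₂ := by
  obtain ⟨w₁, hw₁, hD₁⟩ := step_iff.1 h₁
  obtain ⟨w₂, hw₂, hD₂⟩ := step_iff.1 h₂
  by_cases hne : w₂ = w₁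
  · subst hne
    exact ⟨D₁, D₂, .refl, .refl, hD₁.trans hD₂.symm⟩
  obtain ⟨E₁, hD₁E₁, hE₁⟩ := compatible_step_iso hD₁ (step_erase (hw₂.erase hw₁ hne))
  obtain ⟨E₂, hD₂E₂, hE₂⟩ := compatible_step_iso hD₂ (step_erase (hw₁.erase hw₂ (Ne.symm hne)))
  exact ⟨E₁, E₂, .single hD₁E₁, .single hD₂E₂,
    hE₁.trans ((erase_erase_iso hw₁ hw₂ hne).trans hE₂.symm)⟩

end FDia

/-- the removal-oriented wire homeomorphism rewrite on labelled interfaced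
DAGs is terminating and confluent (up to isomorphism); hence every LIDAG reduces to a
normal form which is unique up to isomorphism, and two LIDAGs are wire-homeomorphic iff
their normal forms are isomorphic. -/
theorem stmt_18 (L : Type) (m n : ℕ) :
    -- termination
    (∀ D : FDia L m n, Acc (fun A B => Step B A) D) ∧
    -- confluence up to isomorphism
    (∀ D D₁ D₂ : FDia L m n, Relation.ReflTransGen Step D D₁ →
      Relation.ReflTransGen Step D D₂ →
      ∃ E₁ E₂, Relation.ReflTransGen Step D₁ E₁ ∧ Relation.ReflTransGen Step D₂ E₂ ∧
        Iso E₁ E₂) ∧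
    -- existence and uniqueness (up to isomorphism) of normal forms
    (∀ D : FDia L m n, ∃ N, Relation.ReflTransGen Step D N ∧ NormalForm N ∧
      ∀ N', Relation.ReflTransGen Step D N' → NormalForm N' → Iso N N') ∧
    -- wire homeomorphism is characterised by the normal forms
    (∀ D₁ D₂ : FDia L m n,
      Relation.EqvGen (fun A B => Iso A B ∨ Step A B) D₁ D₂ ↔
      ∃ N₁ N₂, Relation.ReflTransGen Step D₁ N₁ ∧ NormalForm N₁ ∧
        Relation.ReflTransGen Step D₂ N₂ ∧ NormalForm N₂ ∧ Iso N₁ N₂) := by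
  have hconf {D D₁ D₂ : FDia L m n} :
      Relation.ReflTransGen Step D D₁ → Relation.ReflTransGen Step D D₂ →
        Relation.JoinModulo Iso Step D₁ D₂ :=
    Relation.joinModulo_of_locallyConfluent Iso.equivalence FDia.compatible_step_iso
      FDia.wellFounded_flip_step fun _ _ _ => FDia.step_joinModulo
  refine ⟨FDia.wellFounded_flip_step.apply, fun _ _ _ => hconf, fun D => ?_, fun _ _ =>
    Relation.eqvGen_iff_eqv_normalForms Iso.equivalence FDia.compatible_step_iso
      FDia.wellFounded_flip_step hconf⟩
  obtain ⟨N, hDN, hN⟩ := Relation.exists_reflTransGen_isNormalForm FDia.wellFounded_flip_step D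
  exact ⟨N, hDN, hN, fun N' hDN' hN' => Relation.eqv_of_isNormalForm hconf hDN hN hDN' hN'⟩
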